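/- For all y > 0 and R > 0, ∫₀^∞ e^{−y p²/(2R)} · I₁(p) dp = e^{R/(2y)} − 1. -/

import Mathlib

/-!
Expand `I₁` in its power series and integrate termwise. The Gaussian moment
`∫₀^∞ p^(2k+1) e^(-a p²) dp = k! / (2 a^(k+1))` turns the `k`-th term into `c^(k+1) / (k+1)!`
with `c = 1/(4a)`, and these sum to `e^c - 1`. Termwise integration is legitimate because
on `(0, ∞)` the terms are nonnegative, so the integrals of their norms are the same summable series.
-/

open Real MeasureTheory

/-- Modified Bessel function of the first kind of integer order `ν`. -/
noncomputable def besselI (ν : ℕ) (x : ℝ) : ℝ :=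
  ∑' k : ℕ, (x / 2) ^ (2 * k + ν) / ((Nat.factorial k : ℝ) * (Nat.factorial (k + ν) : ℝ))

open Set Nat

noncomputable def besselITerm (ν k : ℕ) (x : ℝ) : ℝ :=
  (x / 2) ^ (2 * k + ν) / ((k ! : ℝ) * ((k + ν)! : ℝ))

lemma besselI_eq_tsum_besselITerm (ν : ℕ) (x : ℝ) : besselI ν x = ∑' k, besselITerm ν k x :=
  rfl

lemma besselITerm_eq_inv_mul_pow (ν k : ℕ) (x : ℝ) :
    besselITerm ν k x = ((2 : ℝ) ^ (2 * k + ν) * k ! * (k + ν)!)⁻¹ * x ^ (2 * k + ν) := by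
  rw [besselITerm, div_pow]
  ring

lemma besselITerm_nonneg (ν k : ℕ) {x : ℝ} (hx : 0 ≤ x) : 0 ≤ besselITerm ν k x := by
  unfold besselITerm
  positivity

lemma integrableOn_pow_mul_exp_neg_mul_sq {a : ℝ} (ha : 0 < a) (n : ℕ) :
    IntegrableOn (fun p : ℝ => p ^ n * exp (-a * p ^ 2)) (Ioi 0) := by
  simpa only [rpow_natCast] using
    integrableOn_rpow_mul_exp_neg_mul_sq ha (by linarith [n.cast_nonneg (α := ℝ)] : (-1 : ℝ) < n)

lemma integral_odd_pow_mul_exp_neg_mul_sq {a : ℝ} (ha : 0 < a) (k : ℕ) :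
    ∫ p in Ioi (0 : ℝ), p ^ (2 * k + 1) * exp (-a * p ^ 2) = k ! / (2 * a ^ (k + 1)) := by
  have hq : (-1 : ℝ) < (2 * k + 1 : ℕ) := by push_cast; linarith [k.cast_nonneg (α := ℝ)]
  have h := integral_rpow_mul_exp_neg_mul_rpow two_pos hq ha
  simp only [rpow_natCast, rpow_two] at h
  rw [h, show ((2 * k + 1 : ℕ) + 1 : ℝ) / 2 = (k + 1 : ℕ) by push_cast; ring,
    show -((2 * k + 1 : ℕ) + 1 : ℝ) / 2 = -(k + 1 : ℕ) by push_cast; ring,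
    rpow_neg ha.le, rpow_natCast, Nat.cast_succ, Gamma_nat_eq_factorial]
  field_simp

lemma integrableOn_exp_neg_mul_sq_mul_besselITerm {a : ℝ} (ha : 0 < a) (ν k : ℕ) :
    IntegrableOn (fun p => exp (-a * p ^ 2) * besselITerm ν k p) (Ioi 0) := by
  simp_rw [besselITerm_eq_inv_mul_pow, mul_comm (exp _), mul_assoc]
  exact (integrableOn_pow_mul_exp_neg_mul_sq ha _).const_mul _

lemma integral_exp_neg_mul_sq_mul_besselITerm_one {a : ℝ} (ha : 0 < a) (k : ℕ) :
    ∫ p in Ioi (0 : ℝ), exp (-a * p ^ 2) * besselITerm 1 k p = (4 * a)⁻¹ ^ (k + 1) / (k + 1)! := by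
  simp_rw [besselITerm_eq_inv_mul_pow, mul_comm (exp _), mul_assoc, integral_const_mul,
    integral_odd_pow_mul_exp_neg_mul_sq ha, factorial_succ k]
  have h4 : (4 : ℝ) ^ (k + 1) = 2 ^ (2 * k + 1) * 2 := by
    rw [show (4 : ℝ) = 2 ^ 2 by norm_num, ← pow_mul, ← pow_succ]
    ring_nf
  push_cast
  rw [inv_pow, mul_pow, h4]
  field_simp

lemma tsum_pow_succ_div_factorial_succ (c : ℝ) :
    ∑' k : ℕ, c ^ (k + 1) / (k + 1)! = exp c - 1 := by
  rw [exp_eq_exp_ℝ, NormedSpace.exp_eq_tsum_div]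
  beta_reduce
  rw [(summable_pow_div_factorial c).tsum_eq_zero_add]
  simp

theorem integral_exp_neg_mul_sq_mul_besselI_one {a : ℝ} (ha : 0 < a) :
    ∫ p in Ioi (0 : ℝ), exp (-a * p ^ 2) * besselI 1 p = exp (4 * a)⁻¹ - 1 := by
  set F : ℕ → ℝ → ℝ := fun k p => exp (-a * p ^ 2) * besselITerm 1 k p
  have hF_integral : ∀ k, ∫ p in Ioi (0 : ℝ), F k p = (4 * a)⁻¹ ^ (k + 1) / (k + 1)! :=
    integral_exp_neg_mul_sq_mul_besselITerm_one ha
  have hF_norm_summable : Summable fun k => ∫ p in Ioi (0 : ℝ), ‖F k p‖ := by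
    have h_norm : ∀ k, ∫ p in Ioi (0 : ℝ), ‖F k p‖ = ∫ p in Ioi (0 : ℝ), F k p := fun k =>
      setIntegral_congr_fun measurableSet_Ioi fun p hp =>
        norm_of_nonneg (mul_nonneg (exp_pos _).le (besselITerm_nonneg 1 k (le_of_lt hp)))
    simp_rw [h_norm, hF_integral]
    exact (summable_pow_div_factorial _).comp_injective (add_left_injective 1)
  calc ∫ p in Ioi (0 : ℝ), exp (-a * p ^ 2) * besselI 1 p
      = ∫ p in Ioi (0 : ℝ), ∑' k, F k p := by
        simp_rw [F, besselI_eq_tsum_besselITerm, tsum_mul_left]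
    _ = ∑' k, ∫ p in Ioi (0 : ℝ), F k p :=
        (integral_tsum_of_summable_integral_norm
          (integrableOn_exp_neg_mul_sq_mul_besselITerm ha 1) hF_norm_summable).symm
    _ = exp (4 * a)⁻¹ - 1 := by
        simp_rw [hF_integral, tsum_pow_succ_div_factorial_succ]

theorem stmt9 (y R : ℝ) (hy : 0 < y) (hR : 0 < R) :
    (∫ p in Set.Ioi (0:ℝ), Real.exp (-y * p ^ 2 / (2 * R)) * besselI 1 p) =
      Real.exp (R / (2 * y)) - 1 := by
  have hexponent : ∀ p : ℝ, -y * p ^ 2 / (2 * R) = -(y / (2 * R)) * p ^ 2 := fun p => by ring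
  have hvalue : (4 * (y / (2 * R)))⁻¹ = R / (2 * y) := by field_simp; norm_num
  simp_rw [hexponent, ← hvalue]
  exact integral_exp_neg_mul_sq_mul_besselI_one (by positivity)
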